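/- For every element x of Q: x^{ab} = x^{d a b d̄} = x^{d̄ a b d} = x^{ef}. -/

import Mathlib

/-- A quandle as in the paper: a set with operations `▷` and `▷⁻¹` satisfying
axioms A1, A2, A3. -/
class PaperQuandle (Q : Type*) where
  rhd : Q → Q → Q
  rhdInv : Q → Q → Q
  fix : ∀ x : Q, rhd x x = x
  inv_rhd : ∀ x y : Q, rhdInv (rhd x y) y = x
  rhd_inv : ∀ x y : Q, rhd (rhdInv x y) y = x
  self_distrib : ∀ x y z : Q, rhd (rhd x y) z = rhd (rhd x z) (rhd y z)

infixl:65 " ▷ " => PaperQuandle.rhd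
infixl:65 " ▷⁻¹ " => PaperQuandle.rhdInv

/-- The point symmetry at `u`, as a permutation of `Q`: `x ↦ x ▷ u`,
with inverse `x ↦ x ▷⁻¹ u`. -/
def ptSym {Q : Type*} [PaperQuandle Q] (u : Q) : Equiv.Perm Q where
  toFun x := x ▷ u
  invFun x := x ▷⁻¹ u
  left_inv x := PaperQuandle.inv_rhd x u
  right_inv x := PaperQuandle.rhd_inv x u

/-!
In the permutation group of `Q` the point symmetries `S_a, S_b, S_e, S_f` are involutions, and
the relations `dea = 1 = bdf` give `S_d = S_e S_a = S_f S_b` (composing right to left). Hence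
`S_e = S_f S_b S_a`, which turns `S_e² = 1` into the statement that `S_d = S_f S_b` commutes with
`S_b S_a`, and `S_f S_e = S_b S_a`.
-/

theorem commute_and_mul_eq_of_involutions {G : Type*} [Group G] {a b d e f : G}
    (ha : a * a = 1) (hb : b * b = 1) (he : e * e = 1) (hf : f * f = 1)
    (hdea : a * e * d = 1) (hbdf : f * d * b = 1) :
    Commute d (b * a) ∧ f * e = b * a := by
  have inv_a : a⁻¹ = a := inv_eq_of_mul_eq_one_right ha
  have inv_b : b⁻¹ = b := inv_eq_of_mul_eq_one_right hb
  have inv_e : e⁻¹ = e := inv_eq_of_mul_eq_one_right he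
  have inv_f : f⁻¹ = f := inv_eq_of_mul_eq_one_right hf
  have hd_ea : d = e * a := by
    rw [eq_inv_of_mul_eq_one_right hdea, mul_inv_rev, inv_a, inv_e]
  have hd_fb : d = f * b := by
    rw [eq_inv_mul_of_mul_eq (eq_inv_of_mul_eq_one_left hbdf), inv_f, inv_b]
  have he_fba : e = f * b * a := by
    rw [← hd_fb, hd_ea, mul_assoc, ha, mul_one]
  have he_abf : e = a * b * f := by
    rw [← inv_e, he_fba, mul_inv_rev, mul_inv_rev, inv_a, inv_b, inv_f, mul_assoc]
  refine ⟨?_, ?_⟩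
  · calc d * (b * a) = f * a := by rw [hd_fb, mul_assoc, ← mul_assoc b, hb, one_mul]
      _ = b * a * d := by
        rw [hd_ea, he_abf]
        simp only [mul_assoc, ← mul_assoc a a, ha, one_mul, ← mul_assoc b b, hb]
  · rw [he_fba, ← mul_assoc, ← mul_assoc, hf, one_mul]

theorem ptSym_mul_ptSym_eq_one {Q : Type*} [PaperQuandle Q] {u : Q}
    (h : ∀ x : Q, x ▷ u ▷ u = x) : ptSym u * ptSym u = 1 :=
  Equiv.ext h

theorem stmt_5
    {Q : Type*} [PaperQuandle Q] (a b d e f : Q)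
    (rel_a : ∀ x : Q, x ▷ a ▷ a = x)
    (rel_b : ∀ x : Q, x ▷ b ▷ b = x)
    (rel_e : ∀ x : Q, x ▷ e ▷ e = x)
    (rel_f : ∀ x : Q, x ▷ f ▷ f = x)
    (rel_dea : ∀ x : Q, x ▷ d ▷ e ▷ a = x)
    (rel_bdf : ∀ x : Q, x ▷ b ▷ d ▷ f = x) :
    ∀ x : Q, x ▷ a ▷ b = x ▷ d ▷ a ▷ b ▷⁻¹ d ∧
      x ▷ a ▷ b = x ▷⁻¹ d ▷ a ▷ b ▷ d ∧ x ▷ a ▷ b = x ▷ e ▷ f := by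
  obtain ⟨hcomm, hfe⟩ := commute_and_mul_eq_of_involutions (d := ptSym d)
    (ptSym_mul_ptSym_eq_one rel_a) (ptSym_mul_ptSym_eq_one rel_b)
    (ptSym_mul_ptSym_eq_one rel_e) (ptSym_mul_ptSym_eq_one rel_f)
    (Equiv.ext rel_dea) (Equiv.ext rel_bdf)
  intro x
  exact ⟨congrArg (· x) hcomm.inv_mul_cancel.symm, congrArg (· x) hcomm.mul_inv_cancel.symm,
    congrArg (· x) hfe.symm⟩
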